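/- arXiv:1104.0474 — 3 statements merged into one kernel-verified Lean document; each statement's English description precedes it below -/
import Mathlib

section
/- Suppose the Codazzi equations L_v − M_u + aL + bM + cN = 0 and M_v − N_u + αL + βM + γN = 0 hold with smooth coefficients, and suppose L(u,0) = M(u,0) = 0. If ∂_v^l N(u,0) = 0 for all l ≤ k, then ∂_v^{l+1} L(u,0) = ∂_v^{l+1} M(u,0) = 0 for all l ≤ k. -/
open Function

lemma restrictV_contDiff {n : WithTop ℕ∞} {F : ℝ → ℝ → ℝ} (hF : ContDiff ℝ n (uncurry F))
    (u : ℝ) : ContDiff ℝ n (fun v => F u v) :=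
  hF.comp (contDiff_const.prodMk contDiff_id)

lemma derivV_eq {f : ℝ × ℝ → ℝ} {u v : ℝ} (hf : DifferentiableAt ℝ f (u, v)) :
    deriv (fun t => f (u, t)) v = fderiv ℝ f (u, v) (0, 1) := by
  have h1 : HasDerivAt (fun t : ℝ => (u, t)) ((0 : ℝ), (1 : ℝ)) v :=
    (hasDerivAt_const v u).prodMk (hasDerivAt_id v)
  exact (hf.hasFDerivAt.comp_hasDerivAt v h1).deriv

lemma derivU_eq {f : ℝ × ℝ → ℝ} {u v : ℝ} (hf : DifferentiableAt ℝ f (u, v)) :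
    deriv (fun s => f (s, v)) u = fderiv ℝ f (u, v) (1, 0) := by
  have h1 : HasDerivAt (fun s : ℝ => (s, v)) ((1 : ℝ), (0 : ℝ)) u :=
    (hasDerivAt_id u).prodMk (hasDerivAt_const u v)
  exact (hf.hasFDerivAt.comp_hasDerivAt u h1).deriv

lemma contDiff_derivV {n : ℕ} {F : ℝ → ℝ → ℝ} (hF : ContDiff ℝ (n + 1 : ℕ) (uncurry F)) :
    ContDiff ℝ (n : ℕ) (uncurry (fun u v => deriv (fun t => F u t) v)) := by
  have hd : Differentiable ℝ (uncurry F) := hF.differentiable (by simp)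
  have h : ContDiff ℝ (n : ℕ) (fun p : ℝ × ℝ => fderiv ℝ (uncurry F) p (0, 1)) := by
    have := hF.fderiv_right (m := (n : ℕ)) (by exact_mod_cast le_rfl)
    exact this.clm_apply contDiff_const
  have he : (uncurry (fun u v => deriv (fun t => F u t) v)) =
      fun p : ℝ × ℝ => fderiv ℝ (uncurry F) p (0, 1) := by
    funext p
    obtain ⟨u, v⟩ := p
    exact derivV_eq (hd (u, v))
  rw [he]; exact h

lemma contDiff_derivU {n : ℕ} {F : ℝ → ℝ → ℝ} (hF : ContDiff ℝ (n + 1 : ℕ) (uncurry F)) :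
    ContDiff ℝ (n : ℕ) (uncurry (fun u v => deriv (fun s => F s v) u)) := by
  have hd : Differentiable ℝ (uncurry F) := hF.differentiable (by simp)
  have h : ContDiff ℝ (n : ℕ) (fun p : ℝ × ℝ => fderiv ℝ (uncurry F) p (1, 0)) := by
    have := hF.fderiv_right (m := (n : ℕ)) (by exact_mod_cast le_rfl)
    exact this.clm_apply contDiff_const
  have he : (uncurry (fun u v => deriv (fun s => F s v) u)) =
      fun p : ℝ × ℝ => fderiv ℝ (uncurry F) p (1, 0) := by
    funext p
    obtain ⟨u, v⟩ := p
    exact derivU_eq (hd (u, v))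
  rw [he]; exact h

lemma clairaut {F : ℝ → ℝ → ℝ} (hF : ContDiff ℝ 2 (uncurry F)) (u v : ℝ) :
    deriv (fun t => deriv (fun s => F s t) u) v = deriv (fun s => deriv (fun t => F s t) v) u := by
  set f := uncurry F with hf
  have hd : Differentiable ℝ f := hF.differentiable (by norm_num)
  have hG : ContDiff ℝ 1 (fderiv ℝ f) := hF.fderiv_right (by norm_num)
  have hGd : Differentiable ℝ (fderiv ℝ f) := hG.differentiable one_ne_zero
  have hsym := (hF.contDiffAt (x := (u, v))).isSymmSndFDerivAt (by simp [minSmoothness_of_isRCLikeNormedField])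
  -- LHS
  have e1 : (fun t => deriv (fun s => F s t) u) = fun t => fderiv ℝ f (u, t) (1, 0) := by
    funext t; exact derivU_eq (hd (u, t))
  have e2 : (fun s => deriv (fun t => F s t) v) = fun s => fderiv ℝ f (s, v) (0, 1) := by
    funext s; exact derivV_eq (hd (s, v))
  rw [e1, e2]
  have d1 : DifferentiableAt ℝ (fun p : ℝ × ℝ => fderiv ℝ f p (1, 0)) (u, v) :=
    (hGd (u, v)).clm_apply (differentiableAt_const _)
  have d2 : DifferentiableAt ℝ (fun p : ℝ × ℝ => fderiv ℝ f p (0, 1)) (u, v) :=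
    (hGd (u, v)).clm_apply (differentiableAt_const _)
  rw [derivV_eq d1, derivU_eq d2]
  rw [fderiv_clm_apply (hGd (u, v)) (differentiableAt_const _),
      fderiv_clm_apply (hGd (u, v)) (differentiableAt_const _)]
  simp [hsym (0, 1) (1, 0)]

lemma iteratedDeriv_add' {n : ℕ} {f g : ℝ → ℝ} (hf : ContDiff ℝ (n : ℕ) f)
    (hg : ContDiff ℝ (n : ℕ) g) (x : ℝ) :
    iteratedDeriv n (fun y => f y + g y) x = iteratedDeriv n f x + iteratedDeriv n g x := by
  have : (fun y => f y + g y) = f + g := rfl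
  rw [this, ← iteratedDerivWithin_univ, ← iteratedDerivWithin_univ, ← iteratedDerivWithin_univ]
  exact iteratedDerivWithin_add (Set.mem_univ x) uniqueDiffOn_univ hf.contDiffWithinAt hg.contDiffWithinAt

lemma contDiff_deriv_of_succ {l : ℕ} {f : ℝ → ℝ} (hf : ContDiff ℝ (l + 1 : ℕ) f) :
    ContDiff ℝ (l : ℕ) (deriv f) := by
  have : ((l + 1 : ℕ) : WithTop ℕ∞) = (l : ℕ) + 1 := by norm_cast
  rw [this, contDiff_succ_iff_deriv] at hf
  exact hf.2.2

lemma leibniz_zero (l : ℕ) (f g : ℝ → ℝ) (hf : ContDiff ℝ (l : ℕ) f) (hg : ContDiff ℝ (l : ℕ) g)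
    (h : ∀ j ≤ l, iteratedDeriv j g 0 = 0) :
    iteratedDeriv l (fun x => f x * g x) 0 = 0 := by
  induction l generalizing f g with
  | zero => simpa using Or.inr (h 0 le_rfl)
  | succ l IH =>
    have hfd : Differentiable ℝ f := hf.differentiable (by simp)
    have hgd : Differentiable ℝ g := hg.differentiable (by simp)
    rw [iteratedDeriv_succ']
    have e : deriv (fun x => f x * g x) = fun x => deriv f x * g x + f x * deriv g x := by
      funext x; exact deriv_mul (hfd x) (hgd x)
    rw [e]
    have hf' : ContDiff ℝ (l : ℕ) (deriv f) := contDiff_deriv_of_succ hf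
    have hg' : ContDiff ℝ (l : ℕ) (deriv g) := contDiff_deriv_of_succ hg
    have hfl : ContDiff ℝ (l : ℕ) f := hf.of_le (by exact_mod_cast l.le_succ)
    have hgl : ContDiff ℝ (l : ℕ) g := hg.of_le (by exact_mod_cast l.le_succ)
    rw [iteratedDeriv_add' (hf'.mul hgl) (hfl.mul hg')]
    rw [IH _ _ hf' hgl fun j hj => h j (hj.trans l.le_succ),
        IH _ _ hfl hg' fun j hj => by rw [← iteratedDeriv_succ']; exact h (j + 1) (by omega)]
    ring

lemma swap_iter {l : ℕ} {F : ℝ → ℝ → ℝ} (hF : ContDiff ℝ (l + 1 : ℕ) (uncurry F)) (u : ℝ) :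
    iteratedDeriv l (fun t => deriv (fun s => F s t) u) 0
      = deriv (fun s => iteratedDeriv l (fun t => F s t) 0) u := by
  induction l generalizing F with
  | zero => simp [iteratedDeriv_zero]
  | succ l IH =>
    rw [iteratedDeriv_succ']
    have e : deriv (fun t => deriv (fun s => F s t) u)
        = fun t => deriv (fun s => deriv (fun t' => F s t') t) u := by
      funext t
      exact clairaut (hF.of_le (by exact_mod_cast by omega)) u t
    rw [e]
    have hG : ContDiff ℝ (l + 1 : ℕ) (uncurry (fun s t' => deriv (fun t'' => F s t'') t')) :=
      contDiff_derivV hF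
    rw [IH hG]
    congr 1
    funext s
    rw [iteratedDeriv_succ']

lemma codazzi_step (l : ℕ) (u : ℝ) (P : ℝ → ℝ → ℝ) (Q : ℝ → ℝ → ℝ) (f1 f2 f3 g1 g2 g3 : ℝ → ℝ)
    (hP : ∀ v, deriv (fun t => P u t) v
        = deriv (fun s => Q s v) u - f1 v * g1 v - f2 v * g2 v - f3 v * g3 v)
    (hQ : ContDiff ℝ (l + 1 : ℕ) (uncurry Q))
    (hQ0 : ∀ s, iteratedDeriv l (fun t => Q s t) 0 = 0)
    (hf1 : ContDiff ℝ (l : ℕ) f1) (hf2 : ContDiff ℝ (l : ℕ) f2) (hf3 : ContDiff ℝ (l : ℕ) f3)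
    (hg1 : ContDiff ℝ (l : ℕ) g1) (hg2 : ContDiff ℝ (l : ℕ) g2) (hg3 : ContDiff ℝ (l : ℕ) g3)
    (hg1z : ∀ j ≤ l, iteratedDeriv j g1 0 = 0)
    (hg2z : ∀ j ≤ l, iteratedDeriv j g2 0 = 0)
    (hg3z : ∀ j ≤ l, iteratedDeriv j g3 0 = 0) :
    iteratedDeriv (l + 1) (fun t => P u t) 0 = 0 := by
  rw [iteratedDeriv_succ']
  have e : deriv (fun t => P u t)
      = fun v => deriv (fun s => Q s v) u
          + (-(f1 v * g1 v) + (-(f2 v * g2 v) + -(f3 v * g3 v))) := by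
    funext v; rw [hP v]; ring
  rw [e]
  have cQ : ContDiff ℝ (l : ℕ) (fun v => deriv (fun s => Q s v) u) := by
    have := contDiff_derivU hQ
    exact restrictV_contDiff this u
  have c1 : ContDiff ℝ (l : ℕ) (fun v => -(f1 v * g1 v)) := (hf1.mul hg1).neg
  have c2 : ContDiff ℝ (l : ℕ) (fun v => -(f2 v * g2 v)) := (hf2.mul hg2).neg
  have c3 : ContDiff ℝ (l : ℕ) (fun v => -(f3 v * g3 v)) := (hf3.mul hg3).neg
  rw [iteratedDeriv_add' cQ (c1.add (c2.add c3)), iteratedDeriv_add' c1 (c2.add c3),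
    iteratedDeriv_add' c2 c3]
  have hT1 : iteratedDeriv l (fun v => deriv (fun s => Q s v) u) 0 = 0 := by
    rw [swap_iter hQ u]
    have : (fun s => iteratedDeriv l (fun t => Q s t) 0) = fun _ => (0 : ℝ) := funext hQ0
    rw [this, deriv_const]
  have hT2 : iteratedDeriv l (fun v => -(f1 v * g1 v)) 0 = 0 := by
    rw [iteratedDeriv_fun_neg l (fun v => f1 v * g1 v) 0, leibniz_zero l f1 g1 hf1 hg1 hg1z, neg_zero]
  have hT3 : iteratedDeriv l (fun v => -(f2 v * g2 v)) 0 = 0 := by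
    rw [iteratedDeriv_fun_neg l (fun v => f2 v * g2 v) 0, leibniz_zero l f2 g2 hf2 hg2 hg2z, neg_zero]
  have hT4 : iteratedDeriv l (fun v => -(f3 v * g3 v)) 0 = 0 := by
    rw [iteratedDeriv_fun_neg l (fun v => f3 v * g3 v) 0, leibniz_zero l f3 g3 hf3 hg3 hg3z, neg_zero]
  rw [hT1, hT2, hT3, hT4]; ring

/-- Successive differentiation of the Codazzi equations: if `(L, M, N)` satisfy the
Codazzi equations with smooth coefficients, `L` and `M` vanish along `v = 0`, and
`∂_v^l N(u,0) = 0` for all `l ≤ k`, then `∂_v^{l+1} L(u,0) = ∂_v^{l+1} M(u,0) = 0`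
for all `l ≤ k`. -/
theorem codazzi_successive_vanishing (k : ℕ)
    (L M N a b c alpha beta gamma : ℝ → ℝ → ℝ)
    (hL : ContDiff ℝ (k + 2) (Function.uncurry L))
    (hM : ContDiff ℝ (k + 2) (Function.uncurry M))
    (hN : ContDiff ℝ (k + 2) (Function.uncurry N))
    (ha : ContDiff ℝ (⊤ : ℕ∞) (Function.uncurry a))
    (hb : ContDiff ℝ (⊤ : ℕ∞) (Function.uncurry b))
    (hc : ContDiff ℝ (⊤ : ℕ∞) (Function.uncurry c))
    (halpha : ContDiff ℝ (⊤ : ℕ∞) (Function.uncurry alpha))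
    (hbeta : ContDiff ℝ (⊤ : ℕ∞) (Function.uncurry beta))
    (hgamma : ContDiff ℝ (⊤ : ℕ∞) (Function.uncurry gamma))
    (hCodazzi1 : ∀ u v,
      deriv (fun t => L u t) v - deriv (fun s => M s v) u
        + a u v * L u v + b u v * M u v + c u v * N u v = 0)
    (hCodazzi2 : ∀ u v,
      deriv (fun t => M u t) v - deriv (fun s => N s v) u
        + alpha u v * L u v + beta u v * M u v + gamma u v * N u v = 0)
    (hL0 : ∀ u, L u 0 = 0)
    (hM0 : ∀ u, M u 0 = 0)
    (hN0 : ∀ l ≤ k, ∀ u, iteratedDeriv l (fun t => N u t) 0 = 0) :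
    ∀ l ≤ k, ∀ u, iteratedDeriv (l + 1) (fun t => L u t) 0 = 0 ∧
      iteratedDeriv (l + 1) (fun t => M u t) 0 = 0 := by
  have key : ∀ l, l ≤ k + 1 → ∀ u,
      iteratedDeriv l (fun t => L u t) 0 = 0 ∧ iteratedDeriv l (fun t => M u t) 0 = 0 := by
    intro l
    induction l using Nat.strong_induction_on with
    | _ l IH =>
      match l with
      | 0 =>
        intro _ u
        constructor <;> simp [iteratedDeriv_zero, hL0 u, hM0 u]
      | (l + 1) =>
        intro hl u
        have hlk : l ≤ k := by omega
        -- ContDiff facts at level l for restricted functions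
        have hle : ((l : ℕ) : WithTop ℕ∞) ≤ ((k + 2 : ℕ) : WithTop ℕ∞) := by
          exact_mod_cast (by omega : l ≤ k + 2)
        have cL : ContDiff ℝ (l : ℕ) (fun v => L u v) := restrictV_contDiff (hL.of_le hle) u
        have cM : ContDiff ℝ (l : ℕ) (fun v => M u v) := restrictV_contDiff (hM.of_le hle) u
        have cN : ContDiff ℝ (l : ℕ) (fun v => N u v) := restrictV_contDiff (hN.of_le hle) u
        have ca : ContDiff ℝ (l : ℕ) (fun v => a u v) := restrictV_contDiff (ha.of_le (by exact_mod_cast le_top)) u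
        have cb : ContDiff ℝ (l : ℕ) (fun v => b u v) := restrictV_contDiff (hb.of_le (by exact_mod_cast le_top)) u
        have cc : ContDiff ℝ (l : ℕ) (fun v => c u v) := restrictV_contDiff (hc.of_le (by exact_mod_cast le_top)) u
        have cal : ContDiff ℝ (l : ℕ) (fun v => alpha u v) :=
          restrictV_contDiff (halpha.of_le (by exact_mod_cast le_top)) u
        have cbe : ContDiff ℝ (l : ℕ) (fun v => beta u v) :=
          restrictV_contDiff (hbeta.of_le (by exact_mod_cast le_top)) u
        have cga : ContDiff ℝ (l : ℕ) (fun v => gamma u v) :=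
          restrictV_contDiff (hgamma.of_le (by exact_mod_cast le_top)) u
        have hle1 : ((l + 1 : ℕ) : WithTop ℕ∞) ≤ ((k + 2 : ℕ) : WithTop ℕ∞) := by
          exact_mod_cast (by omega : l + 1 ≤ k + 2)
        have hM1 : ContDiff ℝ (l + 1 : ℕ) (uncurry M) := hM.of_le hle1
        have hN1 : ContDiff ℝ (l + 1 : ℕ) (uncurry N) := hN.of_le hle1
        -- vanishing of lower-order derivatives
        have hLz : ∀ j ≤ l, iteratedDeriv j (fun t => L u t) 0 = 0 :=
          fun j hj => (IH j (by omega) (by omega) u).1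
        have hMz : ∀ j ≤ l, iteratedDeriv j (fun t => M u t) 0 = 0 :=
          fun j hj => (IH j (by omega) (by omega) u).2
        have hNz : ∀ j ≤ l, iteratedDeriv j (fun t => N u t) 0 = 0 :=
          fun j hj => hN0 j (by omega) u
        constructor
        · exact codazzi_step l u L M (fun v => a u v) (fun v => b u v) (fun v => c u v)
            (fun v => L u v) (fun v => M u v) (fun v => N u v)
            (fun v => by have := hCodazzi1 u v; linarith)
            hM1 (fun s => (IH l (by omega) (by omega) s).2)
            ca cb cc cL cM cN hLz hMz hNz
        · exact codazzi_step l u M N (fun v => alpha u v) (fun v => beta u v)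
            (fun v => gamma u v)
            (fun v => L u v) (fun v => M u v) (fun v => N u v)
            (fun v => by have := hCodazzi2 u v; linarith)
            hN1 (fun s => hN0 l hlk s)
            cal cbe cga cL cM cN hLz hMz hNz
  intro l hl u
  exact key (l + 1) (by omega) u
end

section
/- Let A¹ = [[0, −N], [−N, 2M]] and A² = [[N, 0], [0, −L]] be 2×2 real symmetric matrices with N > 0, L ≤ 0, and −L/N ≤ 1. Then for any unit vector (ν₁, ν₂) with ν₁ = ±√(−L/N)/√(1 − L/N) and ν₂ = 1/√(1 − L/N), and any vector U = (v, w), one has U^*(A¹ν₁ + A²ν₂)U = N ν₂ (v ± √(−L/N) w)² ≥ 0. -/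
open Matrix

/-- Boundary-term positivity along characteristic (asymptotic) curves: for
`A¹ = [[0, −N], [−N, 2M]]`, `A² = [[N, 0], [0, −L]]` with `N > 0`, `L ≤ 0`,
`−L/N ≤ 1` (and `M = 0` in the adapted coordinates of the paper), the conormal
`(ν₁, ν₂)` with `ν₁ = ±√(−L/N)/√(1 − L/N)`, `ν₂ = 1/√(1 − L/N)` is a unit vector
and for any `U = (v, w)` one has
`Uᵀ(A¹ν₁ + A²ν₂)U = N ν₂ (v ∓ √(−L/N) w)² ≥ 0`. -/
theorem boundary_term_nonnegative (L M N ν₁ ν₂ v w ε : ℝ)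
    (hε : ε = 1 ∨ ε = -1)
    (hN : 0 < N) (hL : L ≤ 0) (hM : M = 0) (hLN : -L / N ≤ 1)
    (hν₁ : ν₁ = ε * Real.sqrt (-L / N) / Real.sqrt (1 - L / N))
    (hν₂ : ν₂ = 1 / Real.sqrt (1 - L / N)) :
    let A1 : Matrix (Fin 2) (Fin 2) ℝ := !![0, -N; -N, 2 * M]
    let A2 : Matrix (Fin 2) (Fin 2) ℝ := !![N, 0; 0, -L]
    let U : Fin 2 → ℝ := ![v, w]
    ν₁ ^ 2 + ν₂ ^ 2 = 1 ∧
    U ⬝ᵥ ((ν₁ • A1 + ν₂ • A2) *ᵥ U)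
      = N * ν₂ * (v - ε * Real.sqrt (-L / N) * w) ^ 2 ∧
    0 ≤ U ⬝ᵥ ((ν₁ • A1 + ν₂ • A2) *ᵥ U) := by
  intro A1 A2 U
  set s := Real.sqrt (-L / N) with hs
  set r := Real.sqrt (1 - L / N) with hr
  have hLN0 : 0 ≤ -L / N := div_nonneg (by linarith) hN.le
  have hneg : -L / N = -(L / N) := neg_div N L
  have hs2 : s ^ 2 = -L / N := Real.sq_sqrt hLN0
  have hr2 : r ^ 2 = 1 - L / N := Real.sq_sqrt (by linarith [hLN0, hneg])
  have hrpos : 0 < r := Real.sqrt_pos.mpr (by linarith [hLN0, hneg])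
  have hε2 : ε ^ 2 = 1 := by rcases hε with h | h <;> simp [h]
  have hν₁' : ν₁ = ε * s * ν₂ := by rw [hν₁, hν₂]; ring
  have hNs2 : N * s ^ 2 = -L := by
    rw [hs2]; field_simp
  have hν₂pos : 0 < ν₂ := by rw [hν₂]; positivity
  have key : U ⬝ᵥ ((ν₁ • A1 + ν₂ • A2) *ᵥ U)
      = N * ν₂ * (v - ε * s * w) ^ 2 := by
    simp [A1, A2, U, dotProduct, mulVec, Fin.sum_univ_succ, hM]
    linear_combination (-2 * N * v * w) * hν₁' + (-(ν₂ * w ^ 2)) * hNs2 +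
      (-(ν₂ * N * s ^ 2 * w ^ 2)) * hε2
  refine ⟨?_, key, ?_⟩
  · rw [hν₁, hν₂]
    field_simp
    linear_combination s ^ 2 * hε2 + hs2 - hr2 + hneg
  · rw [key]; positivity
end

section
/- Let Γ be a smooth closed curve in a surface S ⊂ R³ with second fundamental form II = L dx² + 2M dx dt + N dt² in coordinates (x,t) ∈ [0,l) × [0,t₀) where t = 0 is Γ and Γ is an asymptotic curve (L(x,0) = 0) with M(x,0) ≠ 0. Then ∫₀^l M^{-1} ∂_t L (x,0) dx = ± ∫_Γ k_g k_n |K|^{-1/2} ds, where k_g is the geodesic curvature of Γ, k_n the normal curvature of S in the direction perpendicular to Γ, K < 0 the Gaussian curvature, and ds arclength. -/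
/-- Partial derivative in the first variable (`x`). -/
noncomputable def pdx (f : ℝ → ℝ → ℝ) (x t : ℝ) : ℝ := deriv (fun s => f s t) x

/-- Partial derivative in the second variable (`t`). -/
noncomputable def pdt (f : ℝ → ℝ → ℝ) (x t : ℝ) : ℝ := deriv (fun s => f x s) t


lemma pdx_fderiv (f : ℝ → ℝ → ℝ) (hf : ContDiff ℝ 1 (Function.uncurry f)) (x t : ℝ) :
    HasDerivAt (fun s => f s t) (fderiv ℝ (Function.uncurry f) (x, t) (1, 0)) x := by
  have h1 : HasFDerivAt (Function.uncurry f) (fderiv ℝ (Function.uncurry f) (x,t)) (x,t) :=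
    (hf.differentiable one_ne_zero (x,t)).hasFDerivAt
  have h2 : HasDerivAt (fun s : ℝ => ((s, t) : ℝ × ℝ)) ((1:ℝ), (0:ℝ)) x :=
    (hasDerivAt_id x).prodMk (hasDerivAt_const x t)
  exact h1.comp_hasDerivAt x h2

lemma pdt_fderiv (f : ℝ → ℝ → ℝ) (hf : ContDiff ℝ 1 (Function.uncurry f)) (x t : ℝ) :
    HasDerivAt (fun s => f x s) (fderiv ℝ (Function.uncurry f) (x, t) (0, 1)) t := by
  have h1 : HasFDerivAt (Function.uncurry f) (fderiv ℝ (Function.uncurry f) (x,t)) (x,t) :=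
    (hf.differentiable one_ne_zero (x,t)).hasFDerivAt
  have h2 : HasDerivAt (fun s : ℝ => ((x, s) : ℝ × ℝ)) ((0:ℝ), (1:ℝ)) t :=
    (hasDerivAt_const t x).prodMk (hasDerivAt_id t)
  exact h1.comp_hasDerivAt t h2

lemma hasDerivAt_pdx (f : ℝ → ℝ → ℝ) (hf : ContDiff ℝ 1 (Function.uncurry f)) (x t : ℝ) :
    HasDerivAt (fun s => f s t) (pdx f x t) x :=
  (pdx_fderiv f hf x t).differentiableAt.hasDerivAt

lemma continuous_pdx (f : ℝ → ℝ → ℝ) (hf : ContDiff ℝ 1 (Function.uncurry f)) :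
    Continuous (fun x => pdx f x 0) := by
  have h : (fun x => pdx f x 0) = fun x => fderiv ℝ (Function.uncurry f) (x,0) (1, 0) :=
    funext fun x => (pdx_fderiv f hf x 0).deriv
  rw [h]
  exact ((hf.continuous_fderiv one_ne_zero).comp
    (continuous_id.prodMk continuous_const)).clm_apply continuous_const

lemma continuous_pdt (f : ℝ → ℝ → ℝ) (hf : ContDiff ℝ 1 (Function.uncurry f)) :
    Continuous (fun x => pdt f x 0) := by
  have h : (fun x => pdt f x 0) = fun x => fderiv ℝ (Function.uncurry f) (x,0) (0, 1) :=
    funext fun x => (pdt_fderiv f hf x 0).deriv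
  rw [h]
  exact ((hf.continuous_fderiv one_ne_zero).comp
    (continuous_id.prodMk continuous_const)).clm_apply continuous_const

lemma key_alg (e f g n m lt mx ex et fx gx se sD ε : ℝ)
    (he : se^2 = e) (hD : sD^2 = e*g - f^2) (hse : 0 < se) (hsD : 0 < sD)
    (hm : m ≠ 0) (hε : ε^2 = 1)
    (hcod : lt - mx
        + ((g*ex - 2*f*fx + f*et)/(2*(e*g-f^2)) - (e*gx - f*et)/(2*(e*g-f^2)))*m
        + ((2*e*fx - e*et - f*ex)/(2*(e*g-f^2)))*n = 0) :
    m⁻¹ * lt =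
      (mx/m + (ex*g + e*gx - 2*f*fx)/(2*(e*g-f^2)) - ex/e)
      - ε * ( (((2*e*fx - e*et - f*ex)/(2*(e*g-f^2))) * (se^3)⁻¹ * sD)
              * ((e*n - 2*f*m)/(e*g-f^2)) * ((ε*m)/sD)⁻¹ * se ) := by
  have hlt : lt = mx
      - ((g*ex - 2*f*fx + f*et)/(2*(e*g-f^2)) - (e*gx - f*et)/(2*(e*g-f^2)))*m
      - ((2*e*fx - e*et - f*ex)/(2*(e*g-f^2)))*n := by linarith
  subst hlt
  subst he
  rw [← hD]
  have hε1 : ε = 1 ∨ ε = -1 := by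
    have h0 : (ε - 1) * (ε + 1) = 0 := by linear_combination hε
    rcases mul_eq_zero.mp h0 with h | h
    · exact Or.inl (by linarith)
    · exact Or.inr (by linarith)
  rcases hε1 with h | h <;> subst h <;> field_simp <;>
    linear_combination (2 * m * ex) * hD


/-- The key identity (2.3) of the paper: for a closed asymptotic curve `Γ`,
given in coordinates `(x,t)` (periodic in `x` with period `l`, `t = 0` being `Γ`)
with first fundamental form `E dx² + 2F dx dt + G dt²` and second fundamental
form `L dx² + 2M dx dt + N dt²` satisfying the (first) Codazzi equation with the
Christoffel symbols of the metric, `L(x,0) = 0` and `M(x,0) ≠ 0`, one has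
`∫₀ˡ M⁻¹ ∂_t L (x,0) dx = ± ∫_Γ k_g k_n |K|^{-1/2} ds`, where
`k_g = Γ²₁₁ E^{-3/2} √(det I)` is the geodesic curvature of `Γ`,
`k_n = (EN − 2FM)/det I` is the normal curvature in the direction perpendicular
to `Γ`, `K = (LN − M²)/det I` is the Gaussian curvature, and `ds = √E dx`. -/
theorem closed_asymptotic_curve_integral_identity
    (l : ℝ) (hl : 0 < l)
    (E F G L M N : ℝ → ℝ → ℝ)
    (hEreg : ContDiff ℝ 2 (Function.uncurry E))
    (hFreg : ContDiff ℝ 2 (Function.uncurry F))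
    (hGreg : ContDiff ℝ 2 (Function.uncurry G))
    (hLreg : ContDiff ℝ 1 (Function.uncurry L))
    (hMreg : ContDiff ℝ 1 (Function.uncurry M))
    (hNreg : ContDiff ℝ 1 (Function.uncurry N))
    (hper : ∀ x t, E (x + l) t = E x t ∧ F (x + l) t = F x t ∧ G (x + l) t = G x t ∧
      L (x + l) t = L x t ∧ M (x + l) t = M x t ∧ N (x + l) t = N x t)
    (hE : ∀ x t, 0 < E x t)
    (hd : ∀ x t, 0 < E x t * G x t - (F x t) ^ 2)
    (hL0 : ∀ x, L x 0 = 0)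
    (hM0 : ∀ x, M x 0 ≠ 0)
    -- first Codazzi equation: L_t − M_x + aL + bM + cN = 0 with
    -- a = −Γ¹₁₂, b = Γ¹₁₁ − Γ²₁₂, c = Γ²₁₁
    (hCodazzi : ∀ x t,
      pdt L x t - pdx M x t
        - ((G x t * pdt E x t - F x t * pdx G x t)
            / (2 * (E x t * G x t - (F x t) ^ 2))) * L x t
        + ((G x t * pdx E x t - 2 * F x t * pdx F x t + F x t * pdt E x t)
            / (2 * (E x t * G x t - (F x t) ^ 2))
           - (E x t * pdx G x t - F x t * pdt E x t)
            / (2 * (E x t * G x t - (F x t) ^ 2))) * M x t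
        + ((2 * E x t * pdx F x t - E x t * pdt E x t - F x t * pdx E x t)
            / (2 * (E x t * G x t - (F x t) ^ 2))) * N x t = 0) :
    (∫ x in (0 : ℝ)..l, (M x 0)⁻¹ * pdt L x 0)
      = ∫ x in (0 : ℝ)..l,
          (((2 * E x 0 * pdx F x 0 - E x 0 * pdt E x 0 - F x 0 * pdx E x 0)
              / (2 * (E x 0 * G x 0 - (F x 0) ^ 2)))
            * ((Real.sqrt (E x 0)) ^ 3)⁻¹
            * Real.sqrt (E x 0 * G x 0 - (F x 0) ^ 2))
          * ((E x 0 * N x 0 - 2 * F x 0 * M x 0) / (E x 0 * G x 0 - (F x 0) ^ 2))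
          * (Real.sqrt |(L x 0 * N x 0 - (M x 0) ^ 2)
              / (E x 0 * G x 0 - (F x 0) ^ 2)|)⁻¹
          * Real.sqrt (E x 0)
    ∨
    (∫ x in (0 : ℝ)..l, (M x 0)⁻¹ * pdt L x 0)
      = -∫ x in (0 : ℝ)..l,
          (((2 * E x 0 * pdx F x 0 - E x 0 * pdt E x 0 - F x 0 * pdx E x 0)
              / (2 * (E x 0 * G x 0 - (F x 0) ^ 2)))
            * ((Real.sqrt (E x 0)) ^ 3)⁻¹
            * Real.sqrt (E x 0 * G x 0 - (F x 0) ^ 2))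
          * ((E x 0 * N x 0 - 2 * F x 0 * M x 0) / (E x 0 * G x 0 - (F x 0) ^ 2))
          * (Real.sqrt |(L x 0 * N x 0 - (M x 0) ^ 2)
              / (E x 0 * G x 0 - (F x 0) ^ 2)|)⁻¹
          * Real.sqrt (E x 0) := by
  classical
  have hE1 : ContDiff ℝ 1 (Function.uncurry E) := hEreg.of_le one_le_two
  have hF1 : ContDiff ℝ 1 (Function.uncurry F) := hFreg.of_le one_le_two
  have hG1 : ContDiff ℝ 1 (Function.uncurry G) := hGreg.of_le one_le_two
  -- continuity of the coefficient functions along t = 0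
  have hcomp : Continuous (fun x : ℝ => ((x, (0:ℝ)) : ℝ × ℝ)) :=
    continuous_id.prodMk continuous_const
  have cE : Continuous (fun x => E x 0) := hEreg.continuous.comp hcomp
  have cF : Continuous (fun x => F x 0) := hFreg.continuous.comp hcomp
  have cG : Continuous (fun x => G x 0) := hGreg.continuous.comp hcomp
  have cL : Continuous (fun x => L x 0) := hLreg.continuous.comp hcomp
  have cM : Continuous (fun x => M x 0) := hMreg.continuous.comp hcomp
  have cN : Continuous (fun x => N x 0) := hNreg.continuous.comp hcomp
  have cEx : Continuous (fun x => pdx E x 0) := continuous_pdx E hE1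
  have cEt : Continuous (fun x => pdt E x 0) := continuous_pdt E hE1
  have cFx : Continuous (fun x => pdx F x 0) := continuous_pdx F hF1
  have cGx : Continuous (fun x => pdx G x 0) := continuous_pdx G hG1
  have cMx : Continuous (fun x => pdx M x 0) := continuous_pdx M hMreg
  have cLt : Continuous (fun x => pdt L x 0) := continuous_pdt L hLreg
  have hD0 : ∀ x, E x 0 * G x 0 - (F x 0) ^ 2 ≠ 0 := fun x => ne_of_gt (hd x 0)
  have hE0 : ∀ x, E x 0 ≠ 0 := fun x => ne_of_gt (hE x 0)
  have hseE : ∀ x, (0:ℝ) < Real.sqrt (E x 0) := fun x => Real.sqrt_pos.mpr (hE x 0)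
  have hsD : ∀ x, (0:ℝ) < Real.sqrt (E x 0 * G x 0 - (F x 0) ^ 2) :=
    fun x => Real.sqrt_pos.mpr (hd x 0)
  -- sign dichotomy for M along t = 0
  have hsign : (∀ x, 0 < M x 0) ∨ (∀ x, M x 0 < 0) := by
    rcases lt_or_gt_of_ne (hM0 0) with h0 | h0
    · right; intro x
      by_contra h
      push_neg at h
      have h' : 0 < M x 0 := lt_of_le_of_ne h (Ne.symm (hM0 x))
      have hsub := intermediate_value_uIcc (a := (0:ℝ)) (b := x)
        (f := fun y => M y 0) (cM.continuousOn)
      have h0mem : (0:ℝ) ∈ Set.uIcc (M 0 0) (M x 0) :=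
        Set.mem_uIcc.mpr (Or.inl ⟨le_of_lt h0, le_of_lt h'⟩)
      obtain ⟨c, _, hc⟩ := hsub h0mem
      exact hM0 c hc
    · left; intro x
      by_contra h
      push_neg at h
      have h' : M x 0 < 0 := lt_of_le_of_ne h (hM0 x)
      have hsub := intermediate_value_uIcc (a := (0:ℝ)) (b := x)
        (f := fun y => M y 0) (cM.continuousOn)
      have h0mem : (0:ℝ) ∈ Set.uIcc (M 0 0) (M x 0) :=
        Set.mem_uIcc.mpr (Or.inr ⟨le_of_lt h', le_of_lt h0⟩)
      obtain ⟨c, _, hc⟩ := hsub h0mem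
      exact hM0 c hc
  obtain ⟨ε, hε2, hεM⟩ : ∃ ε : ℝ, ε ^ 2 = 1 ∧ ∀ x, 0 < ε * M x 0 := by
    rcases hsign with h | h
    · exact ⟨1, by norm_num, fun x => by simpa using h x⟩
    · exact ⟨-1, by norm_num, fun x => by simpa using neg_pos.mpr (h x)⟩
  -- defs
  set R : ℝ → ℝ := fun x =>
    (((2 * E x 0 * pdx F x 0 - E x 0 * pdt E x 0 - F x 0 * pdx E x 0)
        / (2 * (E x 0 * G x 0 - (F x 0) ^ 2)))
      * ((Real.sqrt (E x 0)) ^ 3)⁻¹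
      * Real.sqrt (E x 0 * G x 0 - (F x 0) ^ 2))
    * ((E x 0 * N x 0 - 2 * F x 0 * M x 0) / (E x 0 * G x 0 - (F x 0) ^ 2))
    * (Real.sqrt |(L x 0 * N x 0 - (M x 0) ^ 2)
        / (E x 0 * G x 0 - (F x 0) ^ 2)|)⁻¹
    * Real.sqrt (E x 0) with hRdef
  set φ : ℝ → ℝ := fun x =>
    Real.log (M x 0) + Real.log (E x 0 * G x 0 - (F x 0) ^ 2) / 2 - Real.log (E x 0)
    with hφdef
  set φ' : ℝ → ℝ := fun x =>
    pdx M x 0 / M x 0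
    + (pdx E x 0 * G x 0 + E x 0 * pdx G x 0 - 2 * F x 0 * pdx F x 0)
        / (2 * (E x 0 * G x 0 - (F x 0) ^ 2))
    - pdx E x 0 / E x 0 with hφ'def
  -- derivative of φ
  have hder : ∀ x, HasDerivAt φ (φ' x) x := by
    intro x
    have hM' := hasDerivAt_pdx M hMreg x 0
    have hE' := hasDerivAt_pdx E hE1 x 0
    have hF' := hasDerivAt_pdx F hF1 x 0
    have hG' := hasDerivAt_pdx G hG1 x 0
    have hDder : HasDerivAt (fun y => E y 0 * G y 0 - (F y 0) ^ 2)
        (pdx E x 0 * G x 0 + E x 0 * pdx G x 0 - 2 * F x 0 ^ 1 * pdx F x 0) x :=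
      (hE'.mul hG').sub (by simpa using hF'.fun_pow 2)
    have h1 : HasDerivAt (fun y => Real.log (M y 0)) (pdx M x 0 / M x 0) x :=
      hM'.log (hM0 x)
    have h2 : HasDerivAt (fun y => Real.log (E y 0 * G y 0 - (F y 0) ^ 2) / 2)
        (((pdx E x 0 * G x 0 + E x 0 * pdx G x 0 - 2 * F x 0 ^ 1 * pdx F x 0)
          / (E x 0 * G x 0 - (F x 0) ^ 2)) / 2) x :=
      (hDder.log (hD0 x)).div_const 2
    have h3 : HasDerivAt (fun y => Real.log (E y 0)) (pdx E x 0 / E x 0) x :=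
      hE'.log (hE0 x)
    have h := (h1.add h2).sub h3
    have hval : pdx M x 0 / M x 0
        + ((pdx E x 0 * G x 0 + E x 0 * pdx G x 0 - 2 * F x 0 ^ 1 * pdx F x 0)
            / (E x 0 * G x 0 - (F x 0) ^ 2)) / 2
        - pdx E x 0 / E x 0 = φ' x := by
      rw [hφ'def]
      have h2ne := hD0 x
      field_simp
    rw [← hval]
    exact h
  -- continuity of φ'
  have cφ' : Continuous φ' := by
    rw [hφ'def]
    exact ((cMx.div cM hM0).add (((cEx.mul cG).add (cE.mul cGx)
      |>.sub ((continuous_const.mul cF).mul cFx)).div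
      (continuous_const.mul ((cE.mul cG).sub (cF.pow 2)))
      (fun x => by simpa using mul_ne_zero two_ne_zero (hD0 x)))).sub (cEx.div cE hE0)
  -- continuity of R
  have hKne : ∀ x, Real.sqrt |(L x 0 * N x 0 - (M x 0) ^ 2)
      / (E x 0 * G x 0 - (F x 0) ^ 2)| ≠ 0 := by
    intro x
    have hnum : L x 0 * N x 0 - (M x 0) ^ 2 ≠ 0 := by
      rw [hL0 x, zero_mul, zero_sub]
      exact neg_ne_zero.mpr (pow_ne_zero 2 (hM0 x))
    have : (L x 0 * N x 0 - (M x 0) ^ 2) / (E x 0 * G x 0 - (F x 0) ^ 2) ≠ 0 :=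
      div_ne_zero hnum (hD0 x)
    exact ne_of_gt (Real.sqrt_pos.mpr (abs_pos.mpr this))
  have cR : Continuous R := by
    rw [hRdef]
    refine ((((((((continuous_const.mul cE).mul cFx).sub (cE.mul cEt)).sub
        (cF.mul cEx)).div (continuous_const.mul ((cE.mul cG).sub (cF.pow 2)))
        (fun x => by simpa using mul_ne_zero two_ne_zero (hD0 x))).mul
        (((Real.continuous_sqrt.comp cE).pow 3).inv₀
          (fun x => pow_ne_zero 3 (ne_of_gt (hseE x))))).mul
        (Real.continuous_sqrt.comp ((cE.mul cG).sub (cF.pow 2)))).mul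
        (((cE.mul cN).sub ((continuous_const.mul cF).mul cM)).div
          ((cE.mul cG).sub (cF.pow 2)) hD0)).mul
        ((Real.continuous_sqrt.comp
          (((cL.mul cN).sub (cM.pow 2)).div ((cE.mul cG).sub (cF.pow 2)) hD0).abs).inv₀
          hKne) |>.mul (Real.continuous_sqrt.comp cE)
  have hε1 : ε = 1 ∨ ε = -1 := by
    have h0 : (ε - 1) * (ε + 1) = 0 := by linear_combination hε2
    rcases mul_eq_zero.mp h0 with h | h
    · exact Or.inl (by linarith)
    · exact Or.inr (by linarith)
  -- pointwise identity
  have hptw : ∀ x, (M x 0)⁻¹ * pdt L x 0 = φ' x - ε * R x := by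
    intro x
    have hsqK : Real.sqrt |(L x 0 * N x 0 - (M x 0) ^ 2)
        / (E x 0 * G x 0 - (F x 0) ^ 2)| =
        (ε * M x 0) / Real.sqrt (E x 0 * G x 0 - (F x 0) ^ 2) := by
      rw [hL0 x]
      have h1 : |(0 * N x 0 - (M x 0) ^ 2) / (E x 0 * G x 0 - (F x 0) ^ 2)|
          = (M x 0) ^ 2 / (E x 0 * G x 0 - (F x 0) ^ 2) := by
        rw [abs_div, abs_of_pos (hd x 0)]
        congr 1
        rw [zero_mul, zero_sub, abs_neg, abs_of_nonneg (sq_nonneg _)]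
      rw [h1, Real.sqrt_div (sq_nonneg _), Real.sqrt_sq_eq_abs]
      congr 1
      rcases hε1 with h | h
      · rw [h, one_mul]
        exact abs_of_pos (by have := hεM x; rw [h, one_mul] at this; exact this)
      · have hm : M x 0 < 0 := by have := hεM x; rw [h] at this; linarith
        rw [h, abs_of_neg hm]; ring
    have hcod := hCodazzi x 0
    rw [hL0 x, mul_zero, sub_zero] at hcod
    have := key_alg (E x 0) (F x 0) (G x 0) (N x 0) (M x 0) (pdt L x 0)
      (pdx M x 0) (pdx E x 0) (pdt E x 0) (pdx F x 0) (pdx G x 0)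
      (Real.sqrt (E x 0)) (Real.sqrt (E x 0 * G x 0 - (F x 0) ^ 2)) ε
      (Real.sq_sqrt (le_of_lt (hE x 0))) (Real.sq_sqrt (le_of_lt (hd x 0)))
      (hseE x) (hsD x) (hM0 x) hε2 hcod
    rw [hRdef]
    simp only []
    rw [hsqK]
    exact this
  -- FTC
  have hint : (∫ x in (0:ℝ)..l, φ' x) = φ l - φ 0 :=
    intervalIntegral.integral_eq_sub_of_hasDerivAt (fun x _ => hder x)
      (cφ'.intervalIntegrable 0 l)
  have hφper : φ l = φ 0 := by
    obtain ⟨e1, f1, g1, l1, m1, n1⟩ := hper 0 0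
    rw [hφdef]
    simp only []
    rw [← zero_add l, e1, f1, g1, m1]
  have hzero : (∫ x in (0:ℝ)..l, φ' x) = 0 := by rw [hint, hφper, sub_self]
  have hLHS : (∫ x in (0:ℝ)..l, (M x 0)⁻¹ * pdt L x 0) = - (ε * ∫ x in (0:ℝ)..l, R x) := by
    have h1 : (∫ x in (0:ℝ)..l, (M x 0)⁻¹ * pdt L x 0)
        = ∫ x in (0:ℝ)..l, (φ' x - ε * R x) := by
      apply intervalIntegral.integral_congr
      intro x _
      exact hptw x
    rw [h1, intervalIntegral.integral_sub (cφ'.intervalIntegrable 0 l)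
      (show IntervalIntegrable (fun x => ε * R x) MeasureTheory.volume 0 l from
        (continuous_const.mul cR).intervalIntegrable 0 l), hzero,
      intervalIntegral.integral_const_mul, zero_sub]
  rcases hε1 with h | h
  · right
    rw [hLHS, h, one_mul]
  · left
    rw [hLHS, h]
    ring
end
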